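/- Let Λ be a row-finite source-free k-graph and μ, ν, μ', ν', β, β' ∈ Λ with μ ∼ ν, βμ' = μβ', and βν' = νβ'. Then μ' ∼ ν'. -/
import Mathlib


open scoped BigOperators

/-- A row-finite, source-free `k`-graph: a countable small category together with a degree
functor `d : Λ → ℕ^k` satisfying the unique factorization property. -/
structure KGraph (k : ℕ) where
  Obj : Type
  Mor : Type
  countable_mor : Countable Mor
  src : Mor → Obj
  rng : Mor → Obj
  idm : Obj → Mor
  comp : (μ ν : Mor) → src μ = rng ν → Mor
  src_idm : ∀ v, src (idm v) = v
  rng_idm : ∀ v, rng (idm v) = v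
  comp_idm_left : ∀ μ (h : src (idm (rng μ)) = rng μ), comp (idm (rng μ)) μ h = μ
  comp_idm_right : ∀ μ (h : src μ = rng (idm (src μ))), comp μ (idm (src μ)) h = μ
  src_comp : ∀ μ ν h, src (comp μ ν h) = src ν
  rng_comp : ∀ μ ν h, rng (comp μ ν h) = rng μ
  comp_assoc : ∀ μ ν ξ (h1 : src μ = rng ν) (h2 : src ν = rng ξ)
    (h3 : src (comp μ ν h1) = rng ξ) (h4 : src μ = rng (comp ν ξ h2)),
    comp (comp μ ν h1) ξ h3 = comp μ (comp ν ξ h2) h4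
  d : Mor → Fin k → ℕ
  d_idm : ∀ v, d (idm v) = 0
  d_comp : ∀ μ ν h, d (comp μ ν h) = d μ + d ν
  factor : ∀ (ξ : Mor) (m n : Fin k → ℕ), d ξ = m + n →
    ∃! p : Mor × Mor, ∃ h : src p.1 = rng p.2, d p.1 = m ∧ d p.2 = n ∧ comp p.1 p.2 h = ξ
  rowFinite : ∀ (v : Obj) (n : Fin k → ℕ), {μ : Mor | rng μ = v ∧ d μ = n}.Finite
  sourceFree : ∀ (v : Obj) (n : Fin k → ℕ), ∃ μ : Mor, rng μ = v ∧ d μ = n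

namespace KGraph

variable {k : ℕ} {Λ : KGraph k}

/-- An infinite path in a `k`-graph: a degree-preserving functor from `Ω_k` to `Λ`,
recorded by its segments `x(m, n)` for `m ≤ n` in `ℕ^k`. -/
structure InfPath (Λ : KGraph k) where
  seg : (m n : Fin k → ℕ) → m ≤ n → Λ.Mor
  d_seg : ∀ m n h, Λ.d (seg m n h) = fun i => n i - m i
  src_rng : ∀ m n p (h1 : m ≤ n) (h2 : n ≤ p),
    Λ.src (seg m n h1) = Λ.rng (seg n p h2)
  comp_seg : ∀ m n p (h1 : m ≤ n) (h2 : n ≤ p)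
    (h3 : Λ.src (seg m n h1) = Λ.rng (seg n p h2)),
    Λ.comp (seg m n h1) (seg n p h2) h3 = seg m p (h1.trans h2)

/-- The range vertex `x(0) = r(x)` of an infinite path. -/
def InfPath.head (x : Λ.InfPath) : Λ.Obj := Λ.src (x.seg 0 0 le_rfl)

lemma InfPath.head_eq_rng (x : Λ.InfPath) (p : Fin k → ℕ) (h : 0 ≤ p) :
    Λ.rng (x.seg 0 p h) = x.head := (x.src_rng 0 0 p le_rfl h).symm

/-- The shift `σ^p(x)` of an infinite path. -/
def InfPath.shift (x : Λ.InfPath) (p : Fin k → ℕ) : Λ.InfPath where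
  seg m n h := x.seg (m + p) (n + p) (fun i => Nat.add_le_add_right (h i) _)
  d_seg m n h := by
    rw [x.d_seg]; funext i; simp [Nat.add_sub_add_right]
  src_rng m n q h1 h2 := x.src_rng _ _ _ _ _
  comp_seg m n q h1 h2 h3 := x.comp_seg _ _ _ _ _ _

/-- `μ ∼ ν` : `s(μ) = s(ν)` and `μ x = ν x` for every infinite path `x ∈ s(μ)Λ^∞`;
equality of the infinite paths `μ x` and `ν x` is recorded as equality of all their
initial segments. -/
def sim (Λ : KGraph k) (μ ν : Λ.Mor) : Prop :=
  ∃ hsrc : Λ.src μ = Λ.src ν,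
    ∀ (x : Λ.InfPath) (hx : x.head = Λ.src μ) (n : Fin k → ℕ),
      Λ.d μ ≤ n → Λ.d ν ≤ n →
      Λ.comp μ (x.seg 0 (fun i => n i - Λ.d μ i) (fun _ => Nat.zero_le _))
        (hx.symm.trans (x.head_eq_rng _ _).symm)
      = Λ.comp ν (x.seg 0 (fun i => n i - Λ.d ν i) (fun _ => Nat.zero_le _))
        ((hsrc.symm.trans hx.symm).trans (x.head_eq_rng _ _).symm)

/-- An infinite path is (eventually) periodic if `σ^m x = σ^n x` for some `m ≠ n`. -/
def InfPath.eventuallyPeriodic (x : Λ.InfPath) : Prop :=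
  ∃ m n : Fin k → ℕ, m ≠ n ∧ x.shift m = x.shift n

/-- A `k`-graph is aperiodic if every vertex receives a non-periodic infinite path. -/
def aperiodic (Λ : KGraph k) : Prop :=
  ∀ v : Λ.Obj, ∃ x : Λ.InfPath, x.head = v ∧ ¬ x.eventuallyPeriodic

end KGraph

namespace KGraph

variable {k : ℕ} {Λ : KGraph k}

lemma comp_congr {A A' B B' : Λ.Mor} (hA : A = A') (hB : B = B')
    (h : Λ.src A = Λ.rng B) (h' : Λ.src A' = Λ.rng B') :
    Λ.comp A B h = Λ.comp A' B' h' := by subst hA; subst hB; rfl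

lemma seg_congr (x : Λ.InfPath) {m m' n n' : Fin k → ℕ} (hm : m = m') (hn : n = n')
    (h : m ≤ n) (h' : m' ≤ n') : x.seg m n h = x.seg m' n' h' := by
  subst hm; subst hn; rfl

lemma factor_eq {ξ : Λ.Mor} {m n : Fin k → ℕ} (hd : Λ.d ξ = m + n)
    {A B A' B' : Λ.Mor} (h : Λ.src A = Λ.rng B) (h' : Λ.src A' = Λ.rng B')
    (dA : Λ.d A = m) (dB : Λ.d B = n) (dA' : Λ.d A' = m) (dB' : Λ.d B' = n)
    (hc : Λ.comp A B h = ξ) (hc' : Λ.comp A' B' h' = ξ) : A = A' ∧ B = B' := by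
  obtain ⟨p, -, hu⟩ := Λ.factor ξ m n hd
  have h1 := hu (A, B) ⟨h, dA, dB, hc⟩
  have h2 := hu (A', B') ⟨h', dA', dB', hc'⟩
  have h3 := h1.trans h2.symm
  exact ⟨congrArg Prod.fst h3, congrArg Prod.snd h3⟩

lemma cancel_left {β A B : Λ.Mor} (hA : Λ.src β = Λ.rng A) (hB : Λ.src β = Λ.rng B)
    (hd : Λ.d A = Λ.d B) (h : Λ.comp β A hA = Λ.comp β B hB) : A = B :=
  (factor_eq (Λ.d_comp β A hA) hA hB rfl rfl rfl hd.symm rfl h.symm).2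

lemma eq_idm_of_d_zero {γ : Λ.Mor} (h : Λ.d γ = 0) : γ = Λ.idm (Λ.rng γ) := by
  have h1 : Λ.src (Λ.idm (Λ.rng γ)) = Λ.rng γ := Λ.src_idm _
  have h2 : Λ.src γ = Λ.rng (Λ.idm (Λ.src γ)) := (Λ.rng_idm _).symm
  exact (factor_eq (ξ := γ) (m := (0 : Fin k → ℕ)) (n := 0) (by rw [h]; funext i; simp)
    h1 h2 (Λ.d_idm _) h h (Λ.d_idm _) (Λ.comp_idm_left γ h1)
    (Λ.comp_idm_right γ h2)).1.symm

end KGraph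
namespace KGraph

variable {k : ℕ} {Λ : KGraph k}

/-- Initial segment of the concatenated path `β' x` of total degree `N` (for `N ≥ d β'`). -/
def preSeg (x : Λ.InfPath) (β' : Λ.Mor) (hx : x.head = Λ.src β') (N : Fin k → ℕ) : Λ.Mor :=
  Λ.comp β' (x.seg 0 (fun i => N i - Λ.d β' i) (fun _ => Nat.zero_le _))
    ((x.head_eq_rng _ _).trans hx).symm

lemma d_preSeg (x : Λ.InfPath) (β' : Λ.Mor) (hx : x.head = Λ.src β') (N : Fin k → ℕ)
    (hb : Λ.d β' ≤ N) : Λ.d (preSeg x β' hx N) = N := by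
  rw [preSeg, Λ.d_comp, x.d_seg]
  funext i
  have h1 : Λ.d β' i ≤ N i := hb i
  show Λ.d β' i + (N i - Λ.d β' i - 0) = N i
  omega

lemma rng_preSeg (x : Λ.InfPath) (β' : Λ.Mor) (hx : x.head = Λ.src β') (N : Fin k → ℕ) :
    Λ.rng (preSeg x β' hx N) = Λ.rng β' := Λ.rng_comp _ _ _

lemma preSeg_coh (x : Λ.InfPath) (β' : Λ.Mor) (hx : x.head = Λ.src β')
    {N N' : Fin k → ℕ}
    (hle : (fun i => N i - Λ.d β' i) ≤ (fun i => N' i - Λ.d β' i)) :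
    ∃ hs : Λ.src (preSeg x β' hx N) =
        Λ.rng (x.seg (fun i => N i - Λ.d β' i) (fun i => N' i - Λ.d β' i) hle),
      Λ.comp (preSeg x β' hx N)
        (x.seg (fun i => N i - Λ.d β' i) (fun i => N' i - Λ.d β' i) hle) hs =
        preSeg x β' hx N' := by
  have hs0 : Λ.src (x.seg 0 (fun i => N i - Λ.d β' i) (fun _ => Nat.zero_le _)) =
      Λ.rng (x.seg (fun i => N i - Λ.d β' i) (fun i => N' i - Λ.d β' i) hle) :=
    x.src_rng _ _ _ _ _
  have hs : Λ.src (preSeg x β' hx N) =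
      Λ.rng (x.seg (fun i => N i - Λ.d β' i) (fun i => N' i - Λ.d β' i) hle) := by
    rw [preSeg, Λ.src_comp]; exact hs0
  refine ⟨hs, ?_⟩
  have ha := Λ.comp_assoc β' (x.seg 0 (fun i => N i - Λ.d β' i) (fun _ => Nat.zero_le _))
    (x.seg (fun i => N i - Λ.d β' i) (fun i => N' i - Λ.d β' i) hle)
    ((x.head_eq_rng _ _).trans hx).symm hs0 hs
    (by rw [x.comp_seg]; exact ((x.head_eq_rng _ _).trans hx).symm)
  refine ha.trans ?_
  exact comp_congr rfl (x.comp_seg _ _ _ _ _ _) _ _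

end KGraph
namespace KGraph

variable {k : ℕ} {Λ : KGraph k}

lemma exists_c (x : Λ.InfPath) (β' : Λ.Mor) (hx : x.head = Λ.src β') (n : Fin k → ℕ) :
    ∃ c : Λ.Mor, Λ.d c = n ∧ Λ.rng c = Λ.rng β' ∧
      ∀ N : Fin k → ℕ, n ≤ N → Λ.d β' ≤ N →
        ∃ δ, ∃ hs : Λ.src c = Λ.rng δ, Λ.d δ = (fun i => N i - n i) ∧
          Λ.comp c δ hs = preSeg x β' hx N := by
  set b := Λ.d β' with hbdef
  set N₀ : Fin k → ℕ := fun i => max (n i) (b i) with hN₀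
  have hbN₀ : b ≤ N₀ := fun i => le_max_right _ _
  have hnN₀ : n ≤ N₀ := fun i => le_max_left _ _
  obtain ⟨⟨c, δ₀⟩, ⟨hs0, hdc, hdδ0, hcomp0⟩, -⟩ :=
    Λ.factor (preSeg x β' hx N₀) n (fun i => N₀ i - n i)
      (by rw [d_preSeg x β' hx N₀ hbN₀]; funext i
          have h1 : n i ≤ N₀ i := hnN₀ i
          show N₀ i = n i + (N₀ i - n i)
          omega)
  refine ⟨c, hdc, ?_, ?_⟩
  · have hr := Λ.rng_comp c δ₀ hs0
    rw [hcomp0, rng_preSeg] at hr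
    exact hr.symm
  · intro N hnN hbN
    have hN₀N : N₀ ≤ N := fun i => max_le (hnN i) (hbN i)
    have hle : (fun i => N₀ i - b i) ≤ (fun i => N i - b i) := by
      intro i
      have h1 : N₀ i ≤ N i := hN₀N i
      have h2 : b i ≤ N₀ i := hbN₀ i
      show N₀ i - b i ≤ N i - b i
      omega
    obtain ⟨hs1, hco⟩ := preSeg_coh x β' hx hle
    -- tail of the path from N₀ to N
    set t := x.seg (fun i => N₀ i - b i) (fun i => N i - b i) hle with ht
    have hsδt : Λ.src δ₀ = Λ.rng t := by
      have hh := Λ.src_comp c δ₀ hs0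
      rw [hcomp0] at hh
      exact hh.symm.trans hs1
    refine ⟨Λ.comp δ₀ t hsδt, ?_, ?_, ?_⟩
    · rw [Λ.rng_comp]; exact hs0
    · rw [Λ.d_comp, hdδ0, x.d_seg]
      funext i
      have h1 : n i ≤ N₀ i := hnN₀ i
      have h2 : b i ≤ N₀ i := hbN₀ i
      have h3 : N₀ i ≤ N i := hN₀N i
      have h4 : n i ≤ N i := hnN i
      show (N₀ i - n i) + ((N i - b i) - (N₀ i - b i)) = N i - n i
      omega
    · have ha := Λ.comp_assoc c δ₀ t hs0 hsδt
        (by rw [Λ.src_comp]; exact hsδt)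
        (by rw [Λ.rng_comp]; exact hs0)
      refine (ha.symm.trans ?_)
      refine (comp_congr hcomp0 rfl _ ?_).trans hco
      exact hs1

end KGraph
namespace KGraph

variable {k : ℕ} {Λ : KGraph k}

lemma exists_prepend (x : Λ.InfPath) (β' : Λ.Mor) (hx : x.head = Λ.src β') :
    ∃ y : Λ.InfPath, y.head = Λ.rng β' ∧
      ∀ p : Fin k → ℕ, Λ.d β' ≤ p →
        ∃ hs : Λ.src β' = Λ.rng (x.seg 0 (fun i => p i - Λ.d β' i) (fun _ => Nat.zero_le _)),
          y.seg 0 p (fun _ => Nat.zero_le _) =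
            Λ.comp β' (x.seg 0 (fun i => p i - Λ.d β' i) (fun _ => Nat.zero_le _)) hs := by
  choose c hdc hrc hinit using exists_c x β' hx
  set b := Λ.d β' with hbdef
  -- segments between the cumulative morphisms
  have hseg : ∀ (m p : Fin k → ℕ), m ≤ p → ∃ γ, ∃ hs : Λ.src (c m) = Λ.rng γ,
      Λ.d γ = (fun i => p i - m i) ∧ Λ.comp (c m) γ hs = c p := by
    intro m p hmp
    set N : Fin k → ℕ := fun i => max (p i) (b i) with hN
    have hpN : p ≤ N := fun i => le_max_left _ _
    have hbN : b ≤ N := fun i => le_max_right _ _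
    have hmN : m ≤ N := fun i => (hmp i).trans (hpN i)
    obtain ⟨δ₁, hs1, hdδ1, h1⟩ := hinit m N hmN hbN
    obtain ⟨δ₂, hs2, hdδ2, h2⟩ := hinit p N hpN hbN
    obtain ⟨⟨γ, ρ⟩, ⟨hsγρ, hdγ, hdρ, hγρ⟩, -⟩ :=
      Λ.factor δ₁ (fun i => p i - m i) (fun i => N i - p i)
        (by rw [hdδ1]; funext i
            have a1 : m i ≤ p i := hmp i
            have a2 : p i ≤ N i := hpN i
            show N i - m i = (p i - m i) + (N i - p i)
            omega)
    have hrγ : Λ.rng δ₁ = Λ.rng γ := by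
      have := Λ.rng_comp γ ρ hsγρ
      rw [hγρ] at this
      exact this
    have hsγ : Λ.src (c m) = Λ.rng γ := hs1.trans hrγ
    have hassoc := Λ.comp_assoc (c m) γ ρ hsγ hsγρ
      (by rw [Λ.src_comp]; exact hsγρ) (by rw [hγρ]; exact hs1)
    have hkey : Λ.comp (Λ.comp (c m) γ hsγ) ρ (by rw [Λ.src_comp]; exact hsγρ)
        = preSeg x β' hx N :=
      hassoc.trans ((comp_congr rfl hγρ _ hs1).trans h1)
    have hdA : Λ.d (Λ.comp (c m) γ hsγ) = p := by
      rw [Λ.d_comp, hdc, hdγ]; funext i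
      have a1 : m i ≤ p i := hmp i
      show m i + (p i - m i) = p i
      omega
    have hdP : Λ.d (preSeg x β' hx N) = p + (fun i => N i - p i) := by
      rw [d_preSeg x β' hx N hbN]; funext i
      have a2 : p i ≤ N i := hpN i
      show N i = p i + (N i - p i)
      omega
    have := (factor_eq hdP (by rw [Λ.src_comp]; exact hsγρ) hs2
      hdA hdρ (hdc p) hdδ2 hkey h2).1
    exact ⟨γ, hsγ, hdγ, this⟩
  choose sg hs_sg hd_sg hc_sg using hseg
  have hsrc_c0 : Λ.src (c 0) = Λ.rng β' := by
    have h0 : c 0 = Λ.idm (Λ.rng (c 0)) := eq_idm_of_d_zero (hdc 0)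
    rw [h0, Λ.src_idm]
    exact hrc 0
  have hc0p : ∀ (p : Fin k → ℕ) (h : (0 : Fin k → ℕ) ≤ p), sg 0 p h = c p := by
    intro p h
    have hcc := hc_sg 0 p h
    have hrγ : Λ.rng (sg 0 p h) = Λ.rng (c 0) :=
      (hs_sg 0 p h).symm.trans (hsrc_c0.trans (hrc 0).symm)
    have h0 : c 0 = Λ.idm (Λ.rng (sg 0 p h)) :=
      (eq_idm_of_d_zero (hdc 0)).trans (by rw [hrγ])
    have hred : Λ.comp (c 0) (sg 0 p h) (hs_sg 0 p h) = sg 0 p h :=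
      (comp_congr h0 rfl (hs_sg 0 p h) (Λ.src_idm _)).trans (Λ.comp_idm_left _ (Λ.src_idm _))
    exact hred.symm.trans hcc
  have hcp : ∀ p : Fin k → ℕ, b ≤ p → c p = preSeg x β' hx p := by
    intro p hbp
    obtain ⟨δ, hsδ, hdδ, hcδ⟩ := hinit p p le_rfl hbp
    have hdδ0 : Λ.d δ = 0 := hdδ.trans (funext fun i => Nat.sub_self _)
    have hδ : δ = Λ.idm (Λ.src (c p)) := (eq_idm_of_d_zero hdδ0).trans (by rw [hsδ])
    have hred : Λ.comp (c p) δ hsδ = c p :=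
      (comp_congr rfl hδ hsδ (Λ.rng_idm _).symm).trans (Λ.comp_idm_right _ _)
    exact hred.symm.trans hcδ
  refine ⟨⟨sg, hd_sg, ?_, ?_⟩, ?_, ?_⟩
  · -- src_rng
    intro m p q h1 h2
    have s1 : Λ.src (sg m p h1) = Λ.src (c p) := by
      have := Λ.src_comp (c m) (sg m p h1) (hs_sg m p h1)
      rw [hc_sg m p h1] at this
      exact this.symm
    rw [s1]
    exact hs_sg p q h2
  · -- comp_seg
    intro m p q h1 h2 h3
    refine cancel_left (β := c m) (by rw [Λ.rng_comp]; exact hs_sg m p h1)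
      (hs_sg m q (h1.trans h2)) ?_ ?_
    · rw [Λ.d_comp, hd_sg, hd_sg, hd_sg]
      funext i
      have a1 : m i ≤ p i := h1 i
      have a2 : p i ≤ q i := h2 i
      show (p i - m i) + (q i - p i) = q i - m i
      omega
    · exact ((Λ.comp_assoc (c m) (sg m p h1) (sg p q h2) (hs_sg m p h1) h3
        (by rw [Λ.src_comp]; exact h3) _).symm).trans
        (((comp_congr (hc_sg m p h1) rfl _ (hs_sg p q h2)).trans (hc_sg p q h2)).trans
          ((hc_sg m q (h1.trans h2)).symm))
  · -- head
    show Λ.src (sg 0 0 le_rfl) = Λ.rng β'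
    have s1 : Λ.src (sg 0 0 le_rfl) = Λ.src (c 0) := by
      have := Λ.src_comp (c 0) (sg 0 0 le_rfl) (hs_sg 0 0 le_rfl)
      rw [hc_sg 0 0 le_rfl] at this
      exact this.symm
    rw [s1]
    exact hsrc_c0
  · -- initial segments beyond d β'
    intro p hbp
    refine ⟨((x.head_eq_rng _ _).trans hx).symm, ?_⟩
    exact (hc0p p _).trans (hcp p hbp)

end KGraph
/-- If `μ ∼ ν`, `βμ' = μβ'` and `βν' = νβ'`, then `μ' ∼ ν'`. -/
theorem sim_of_common_extension {k : ℕ} (Λ : KGraph k) (μ ν μ' ν' β β' : Λ.Mor)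
    (hsim : Λ.sim μ ν)
    (h₁ : Λ.src β = Λ.rng μ') (h₂ : Λ.src μ = Λ.rng β')
    (h₃ : Λ.src β = Λ.rng ν') (h₄ : Λ.src ν = Λ.rng β')
    (e₁ : Λ.comp β μ' h₁ = Λ.comp μ β' h₂)
    (e₂ : Λ.comp β ν' h₃ = Λ.comp ν β' h₄) :
    Λ.sim μ' ν' := by
  classical
  obtain ⟨hsμν, hE⟩ := hsim
  have hsμ'β' : Λ.src μ' = Λ.src β' := by
    have a1 : Λ.src (Λ.comp β μ' h₁) = Λ.src μ' := Λ.src_comp _ _ _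
    have a2 : Λ.src (Λ.comp μ β' h₂) = Λ.src β' := Λ.src_comp _ _ _
    rw [e₁] at a1
    exact a1.symm.trans a2
  have hsν'β' : Λ.src ν' = Λ.src β' := by
    have a1 : Λ.src (Λ.comp β ν' h₃) = Λ.src ν' := Λ.src_comp _ _ _
    have a2 : Λ.src (Λ.comp ν β' h₄) = Λ.src β' := Λ.src_comp _ _ _
    rw [e₂] at a1
    exact a1.symm.trans a2
  have hsrc' : Λ.src μ' = Λ.src ν' := hsμ'β'.trans hsν'β'.symm
  have hdeg1 : ∀ i, Λ.d β i + Λ.d μ' i = Λ.d μ i + Λ.d β' i := by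
    intro i
    have := congrArg (fun z => Λ.d z i) e₁
    simpa only [Λ.d_comp, Pi.add_apply] using this
  have hdeg2 : ∀ i, Λ.d β i + Λ.d ν' i = Λ.d ν i + Λ.d β' i := by
    intro i
    have := congrArg (fun z => Λ.d z i) e₂
    simpa only [Λ.d_comp, Pi.add_apply] using this
  refine ⟨hsrc', ?_⟩
  intro x hx n hnμ' hnν'
  have hxβ : x.head = Λ.src β' := hx.trans hsμ'β'
  obtain ⟨y, hyhead, hyseg⟩ := KGraph.exists_prepend x β' hxβ
  have hyμ : y.head = Λ.src μ := hyhead.trans h₂.symm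
  set N : Fin k → ℕ := fun i => n i + Λ.d β i with hNdef
  have hNμ : Λ.d μ ≤ N := by
    intro i
    have a1 := hdeg1 i
    have a2 : Λ.d μ' i ≤ n i := hnμ' i
    show Λ.d μ i ≤ n i + Λ.d β i
    omega
  have hNν : Λ.d ν ≤ N := by
    intro i
    have a1 := hdeg2 i
    have a2 : Λ.d ν' i ≤ n i := hnν' i
    show Λ.d ν i ≤ n i + Λ.d β i
    omega
  have hEq := hE y hyμ N hNμ hNν
  -- the two relevant initial segments of y
  obtain ⟨hsL, hL⟩ := hyseg (fun i => N i - Λ.d μ i)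
    (by intro i
        have a1 := hdeg1 i
        have a2 : Λ.d μ' i ≤ n i := hnμ' i
        show Λ.d β' i ≤ n i + Λ.d β i - Λ.d μ i
        omega)
  obtain ⟨hsR, hR⟩ := hyseg (fun i => N i - Λ.d ν i)
    (by intro i
        have a1 := hdeg2 i
        have a2 : Λ.d ν' i ≤ n i := hnν' i
        show Λ.d β' i ≤ n i + Λ.d β i - Λ.d ν i
        omega)
  -- abbreviations for the x-segments
  have hxeqL : x.seg 0 (fun i => (N i - Λ.d μ i) - Λ.d β' i) (fun _ => Nat.zero_le _)
      = x.seg 0 (fun i => n i - Λ.d μ' i) (fun _ => Nat.zero_le _) := by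
    refine KGraph.seg_congr x rfl ?_ _ _
    funext i
    have a1 := hdeg1 i
    have a2 : Λ.d μ' i ≤ n i := hnμ' i
    show (n i + Λ.d β i - Λ.d μ i) - Λ.d β' i = n i - Λ.d μ' i
    omega
  have hxeqR : x.seg 0 (fun i => (N i - Λ.d ν i) - Λ.d β' i) (fun _ => Nat.zero_le _)
      = x.seg 0 (fun i => n i - Λ.d ν' i) (fun _ => Nat.zero_le _) := by
    refine KGraph.seg_congr x rfl ?_ _ _
    funext i
    have a1 := hdeg2 i
    have a2 : Λ.d ν' i ≤ n i := hnν' i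
    show (n i + Λ.d β i - Λ.d ν i) - Λ.d β' i = n i - Λ.d ν' i
    omega
  -- source identities for the final segments
  have hsμ'x : Λ.src μ' = Λ.rng (x.seg 0 (fun i => n i - Λ.d μ' i) (fun _ => Nat.zero_le _)) :=
    ((x.head_eq_rng _ _).trans hx).symm
  have hsν'x : Λ.src ν' = Λ.rng (x.seg 0 (fun i => n i - Λ.d ν' i) (fun _ => Nat.zero_le _)) :=
    ((x.head_eq_rng _ _).trans (hx.trans hsrc')).symm
  have hsβ'L : Λ.src β' = Λ.rng (x.seg 0 (fun i => n i - Λ.d μ' i) (fun _ => Nat.zero_le _)) :=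
    ((x.head_eq_rng _ _).trans hxβ).symm
  have hsβ'R : Λ.src β' = Λ.rng (x.seg 0 (fun i => n i - Λ.d ν' i) (fun _ => Nat.zero_le _)) :=
    ((x.head_eq_rng _ _).trans hxβ).symm
  -- rewrite the left side of hEq
  have hLs : Λ.comp μ (y.seg 0 (fun i => N i - Λ.d μ i) (fun _ => Nat.zero_le _))
      (hyμ.symm.trans (y.head_eq_rng _ _).symm)
      = Λ.comp β (Λ.comp μ' (x.seg 0 (fun i => n i - Λ.d μ' i) (fun _ => Nat.zero_le _)) hsμ'x)
        (by rw [Λ.rng_comp]; exact h₁) := by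
    refine (KGraph.comp_congr rfl (hL.trans (KGraph.comp_congr rfl hxeqL hsL hsβ'L)) _
      (by rw [Λ.rng_comp]; exact h₂)).trans ?_
    refine ((Λ.comp_assoc μ β' _ h₂ hsβ'L (by rw [Λ.src_comp]; exact hsβ'L) _).symm).trans ?_
    refine (KGraph.comp_congr e₁.symm rfl _ (by rw [Λ.src_comp]; exact hsμ'x)).trans ?_
    exact Λ.comp_assoc β μ' _ h₁ hsμ'x _ _
  have hRs : Λ.comp ν (y.seg 0 (fun i => N i - Λ.d ν i) (fun _ => Nat.zero_le _))
      ((hsμν.symm.trans hyμ.symm).trans (y.head_eq_rng _ _).symm)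
      = Λ.comp β (Λ.comp ν' (x.seg 0 (fun i => n i - Λ.d ν' i) (fun _ => Nat.zero_le _)) hsν'x)
        (by rw [Λ.rng_comp]; exact h₃) := by
    refine (KGraph.comp_congr rfl (hR.trans (KGraph.comp_congr rfl hxeqR hsR hsβ'R)) _
      (by rw [Λ.rng_comp]; exact h₄)).trans ?_
    refine ((Λ.comp_assoc ν β' _ h₄ hsβ'R (by rw [Λ.src_comp]; exact hsβ'R) _).symm).trans ?_
    refine (KGraph.comp_congr e₂.symm rfl _ (by rw [Λ.src_comp]; exact hsν'x)).trans ?_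
    exact Λ.comp_assoc β ν' _ h₃ hsν'x _ _
  have hfin := (hLs.symm.trans hEq).trans hRs
  refine KGraph.cancel_left (by rw [Λ.rng_comp]; exact h₁) (by rw [Λ.rng_comp]; exact h₃) ?_ hfin
  rw [Λ.d_comp, Λ.d_comp, x.d_seg, x.d_seg]
  funext i
  have a1 : Λ.d μ' i ≤ n i := hnμ' i
  have a2 : Λ.d ν' i ≤ n i := hnν' i
  show Λ.d μ' i + ((n i - Λ.d μ' i) - 0) = Λ.d ν' i + ((n i - Λ.d ν' i) - 0)
  omega
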